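/- arXiv:1508.00280 — 4 statements merged into one kernel-verified Lean document; each statement's English description precedes it below -/
import Mathlib

section
/- Every finite undirected graph U is an induced subgraph of some graph U' that admits a faithful DAG (i.e., U' is a SMIG). -/
/-!
Orient each edge `e = u - v` of `U` as a new source `v_e` with arrows `v_e → u` and `v_e → v`.
This DAG has no directed path of length two, so the ancestors of a node are itself and its direct
predecessors. Hence two distinct original vertices have a common ancestor exactly when some `v_e`
points to both, i.e. when they are adjacent in `U`. Taking `U'` to be the common-ancestor graph of
this DAG makes faithfulness automatic.
-/

/-- `w` is an ancestor of `u` in the directed graph `R` (every node is its own ancestor). -/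
def Ancestor {V : Type*} (R : V → V → Prop) (w u : V) : Prop :=
  Relation.ReflTransGen R w u

/-- `u` and `v` have a common ancestor in `R`. -/
def CommonAnc {V : Type*} (R : V → V → Prop) (u v : V) : Prop :=
  ∃ w, Ancestor R w u ∧ Ancestor R w v

/-- `R` is acyclic (a DAG): no directed cycle. -/
def Acyclic {V : Type*} (R : V → V → Prop) : Prop :=
  ∀ v, ¬ Relation.TransGen R v v

/-- The DAG `R` is faithful to the undirected graph `U`: distinct nodes are
adjacent in `U` iff they have a common ancestor in `R`. -/
def Faithful {V : Type*} (R : V → V → Prop) (U : SimpleGraph V) : Prop :=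
  ∀ u v, u ≠ v → (U.Adj u v ↔ CommonAnc R u v)

/-- Closed neighborhood of `v` in `U`. -/
def Bd {V : Type*} (U : SimpleGraph V) (v : V) : Set V :=
  insert v (U.neighborSet v)

/-- `v` is simplicial in `U`: its closed neighborhood is a clique. -/
def Simplicial {V : Type*} (U : SimpleGraph V) (v : V) : Prop :=
  U.IsClique (Bd U v)

open Relation

section NoTwoStep

variable {α : Type*} {R : α → α → Prop}

theorem reflTransGen_iff_eq_or_of_no_two_step (h : ∀ x y z, R x y → ¬ R y z) {a b : α} :
    ReflTransGen R a b ↔ a = b ∨ R a b := by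
  refine ⟨fun hab => ?_, fun hab => hab.elim (fun e => e ▸ ReflTransGen.refl) ReflTransGen.single⟩
  induction hab with
  | refl => exact Or.inl rfl
  | tail _ hbc ih =>
    rcases ih with rfl | hab
    · exact Or.inr hbc
    · exact (h _ _ _ hab hbc).elim

theorem transGen_iff_of_no_two_step (h : ∀ x y z, R x y → ¬ R y z) {a b : α} :
    TransGen R a b ↔ R a b := by
  refine ⟨fun hab => ?_, TransGen.single⟩
  induction hab with
  | single hab => exact hab
  | tail _ hbc ih => exact (h _ _ _ ih hbc).elim

theorem acyclic_of_no_two_step (h : ∀ x y z, R x y → ¬ R y z) : Acyclic R :=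
  fun v hv =>
    have hvv := (transGen_iff_of_no_two_step h).1 hv
    h v v v hvv hvv

theorem commonAnc_iff_of_no_two_step (h : ∀ x y z, R x y → ¬ R y z) {u v : α} :
    CommonAnc R u v ↔ ∃ w, (w = u ∨ R w u) ∧ (w = v ∨ R w v) := by
  simp only [CommonAnc, Ancestor, reflTransGen_iff_eq_or_of_no_two_step h]

end NoTwoStep

def commonAncGraph {V : Type*} (R : V → V → Prop) : SimpleGraph V where
  Adj u v := u ≠ v ∧ CommonAnc R u v
  symm := ⟨fun _ _ ⟨hne, w, hu, hv⟩ => ⟨hne.symm, w, hv, hu⟩⟩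
  loopless := ⟨fun _ h => h.1 rfl⟩

theorem faithful_commonAncGraph {V : Type*} (R : V → V → Prop) : Faithful R (commonAncGraph R) :=
  fun _ _ hne => and_iff_right hne

section Subdivision

variable {V : Type*} (U : SimpleGraph V)

/-- The new vertex `v_e` of the construction is `Sum.inr e`. -/
def subdivisionDAG : V ⊕ U.edgeSet → V ⊕ U.edgeSet → Prop
  | .inr e, .inl v => v ∈ (e : Sym2 V)
  | _, _ => False

theorem subdivisionDAG_no_two_step :
    ∀ x y z, subdivisionDAG U x y → ¬ subdivisionDAG U y z := by
  rintro (_ | _) (_ | _) (_ | _) h h' <;> first | exact h | exact h'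

theorem commonAnc_subdivisionDAG_inl_iff {a b : V} :
    CommonAnc (subdivisionDAG U) (.inl a) (.inl b) ↔ a = b ∨ U.Adj a b := by
  rw [commonAnc_iff_of_no_two_step (subdivisionDAG_no_two_step U)]
  constructor
  · rintro ⟨(c | e), hca, hcb⟩
    · simp only [subdivisionDAG, Sum.inl.injEq, or_false] at hca hcb
      exact Or.inl (hca.symm.trans hcb)
    · simp only [subdivisionDAG, reduceCtorEq, false_or] at hca hcb
      by_cases hab : a = b
      · exact Or.inl hab
      · have he : (e : Sym2 V) = s(a, b) := (Sym2.mem_and_mem_iff hab).1 ⟨hca, hcb⟩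
        exact Or.inr (SimpleGraph.mem_edgeSet U |>.1 (he ▸ e.2))
  · rintro (rfl | hab)
    · exact ⟨.inl a, Or.inl rfl, Or.inl rfl⟩
    · exact ⟨.inr ⟨s(a, b), hab⟩, Or.inr (Sym2.mem_mk_left a b), Or.inr (Sym2.mem_mk_right a b)⟩

theorem commonAncGraph_subdivisionDAG_adj_inl {a b : V} :
    (commonAncGraph (subdivisionDAG U)).Adj (.inl a) (.inl b) ↔ U.Adj a b := by
  simp only [commonAncGraph, ne_eq, Sum.inl.injEq, commonAnc_subdivisionDAG_inl_iff]
  exact ⟨fun ⟨hne, h⟩ => h.resolve_left hne, fun h => ⟨h.ne, Or.inr h⟩⟩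

end Subdivision

theorem stmt3 {V : Type u} [Fintype V] (U : SimpleGraph V) :
    ∃ (V' : Type u) (_ : Fintype V') (f : V ↪ V') (U' : SimpleGraph V'),
      (∀ a b : V, U.Adj a b ↔ U'.Adj (f a) (f b)) ∧
      ∃ R : V' → V' → Prop, Acyclic R ∧ Faithful R U' :=
  ⟨V ⊕ U.edgeSet, Fintype.ofFinite _, Function.Embedding.inl, commonAncGraph (subdivisionDAG U),
    fun _ _ => (commonAncGraph_subdivisionDAG_adj_inl U).symm, subdivisionDAG U,
    acyclic_of_no_two_step (subdivisionDAG_no_two_step U), faithful_commonAncGraph _⟩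
end

section
/- A graph U admits a faithful DAG on the same vertex set iff every edge of U is contained in a simplex (a maximal clique containing a simplicial vertex). -/
/-!
(⇒) Above a common ancestor of `u` and `v` lies a source `r` of the DAG. As `r` has no proper
ancestor, faithfulness makes its neighbours exactly its descendants, so `Bd U r` consists of
descendants of `r`, which pairwise share the ancestor `r`: `r` is simplicial.

(⇐) Fix a linear order and let every simplicial vertex point to all its neighbours except
simplicial neighbours that are larger. Every arc leaves a simplicial vertex, so each descendant of
`a` lies in `Bd U a` and a vertex with a proper descendant is simplicial; hence vertices with a
common ancestor are adjacent. Conversely, the largest simplicial vertex of a simplex is an ancestor of all of it.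
-/

section Graph

variable {V : Type*} {U : SimpleGraph V} {R : V → V → Prop}

lemma mem_bd_iff {s a : V} : a ∈ Bd U s ↔ a = s ∨ U.Adj s a := Iff.rfl

lemma self_mem_bd (s : V) : s ∈ Bd U s := Set.mem_insert s _

lemma Simplicial.adj {s a b : V} (hs : Simplicial U s) (ha : a ∈ Bd U s) (hb : b ∈ Bd U s)
    (hab : a ≠ b) : U.Adj a b :=
  hs ha hb hab

lemma mem_bd_comm {a b : V} : a ∈ Bd U b ↔ b ∈ Bd U a := by
  simp only [mem_bd_iff, eq_comm, U.adj_comm]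

lemma Simplicial.mem_bd_of_mem_bd {s a b : V} (hs : Simplicial U s) (ha : a ∈ Bd U s)
    (hb : b ∈ Bd U s) : b ∈ Bd U a := by
  by_cases hab : b = a
  · exact hab ▸ self_mem_bd b
  · exact Or.inr (hs.adj ha hb (Ne.symm hab))

section Source

lemma Ancestor.eq_of_forall_not_rel {r a : V} (hr : ∀ x, ¬ R x r) (h : Ancestor R a r) :
    a = r := by
  rcases h.cases_tail with h | ⟨c, -, hcr⟩
  · exact h.symm
  · exact absurd hcr (hr c)

lemma exists_source_ancestor [Finite V] (hA : Acyclic R) (w : V) :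
    ∃ r, Ancestor R r w ∧ ∀ x, ¬ R x r := by
  have : Std.Irrefl (Relation.TransGen R) := ⟨hA⟩
  have hwf : WellFounded (Relation.TransGen R) := Finite.wellFounded_of_trans_of_irrefl _
  obtain ⟨r, hrw, hmin⟩ := hwf.has_min {x | Ancestor R x w} ⟨w, .refl⟩
  exact ⟨r, hrw, fun x hxr => hmin x (Relation.ReflTransGen.head hxr hrw) (.single hxr)⟩

variable (hF : Faithful R U) {r : V} (hr : ∀ x, ¬ R x r)
include hF hr

lemma mem_bd_iff_ancestor_of_source {a : V} : a ∈ Bd U r ↔ Ancestor R r a := by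
  by_cases har : a = r
  · subst har
    exact ⟨fun _ => .refl, fun _ => self_mem_bd a⟩
  constructor
  · rintro (h | hadj)
    · exact absurd h har
    · obtain ⟨w, hwr, hwa⟩ := (hF r a hadj.ne).mp hadj
      rwa [← hwr.eq_of_forall_not_rel hr]
  · exact fun h => Or.inr ((hF r a (Ne.symm har)).mpr ⟨r, .refl, h⟩)

lemma simplicial_of_source : Simplicial U r := by
  intro a ha b hb hab
  exact (hF a b hab).mpr ⟨r, (mem_bd_iff_ancestor_of_source hF hr).mp ha,
    (mem_bd_iff_ancestor_of_source hF hr).mp hb⟩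

end Source

lemma exists_simplex_of_faithful [Finite V] (hA : Acyclic R) (hF : Faithful R U) {u v : V}
    (huv : U.Adj u v) : ∃ s, Simplicial U s ∧ u ∈ Bd U s ∧ v ∈ Bd U s := by
  obtain ⟨w, hwu, hwv⟩ := (hF u v huv.ne).mp huv
  obtain ⟨r, hrw, hr⟩ := exists_source_ancestor hA w
  exact ⟨r, simplicial_of_source hF hr, (mem_bd_iff_ancestor_of_source hF hr).mpr (hrw.trans hwu),
    (mem_bd_iff_ancestor_of_source hF hr).mpr (hrw.trans hwv)⟩

section SimplicialSources

variable (hR : ∀ a b, R a b → Simplicial U a ∧ U.Adj a b)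
include hR

lemma mem_bd_of_ancestor {a b : V} (h : Ancestor R a b) : b ∈ Bd U a := by
  induction h with
  | refl => exact self_mem_bd a
  | tail _ hcb ih =>
    obtain ⟨hc, hadj⟩ := hR _ _ hcb
    exact hc.mem_bd_of_mem_bd (mem_bd_comm.mp ih) (Or.inr hadj)

lemma simplicial_of_ancestor {a b : V} (h : Ancestor R a b) (hab : a ≠ b) : Simplicial U a := by
  rcases h.cases_head with h | ⟨c, hac, -⟩
  · exact absurd h hab
  · exact (hR a c hac).1

lemma adj_of_commonAnc {u v : V} (huv : u ≠ v) (h : CommonAnc R u v) : U.Adj u v := by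
  obtain ⟨w, hwu, hwv⟩ := h
  by_cases hwu' : w = u
  · subst hwu'
    exact (mem_bd_of_ancestor hR hwv).resolve_left (Ne.symm huv)
  · exact (simplicial_of_ancestor hR hwu hwu').adj (mem_bd_of_ancestor hR hwu)
      (mem_bd_of_ancestor hR hwv) huv

end SimplicialSources

section SimplexDag

variable [LinearOrder V]

def simplexDag (U : SimpleGraph V) (a b : V) : Prop :=
  Simplicial U a ∧ U.Adj a b ∧ (Simplicial U b → b < a)

lemma lt_of_transGen_simplexDag {a b : V} (h : Relation.TransGen (simplexDag U) a b)
    (hb : Simplicial U b) : b < a := by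
  induction h with
  | single hab => exact hab.2.2 hb
  | tail _ hcb ih => exact (hcb.2.2 hb).trans (ih hcb.1)

lemma simplexDag_acyclic : Acyclic (simplexDag U) := by
  intro v hv
  obtain ⟨c, hvc, -⟩ := Relation.TransGen.head'_iff.mp hv
  exact lt_irrefl v (lt_of_transGen_simplexDag hv hvc.1)

lemma commonAnc_simplexDag_of_simplicial [Finite V] {s u v : V} (hs : Simplicial U s)
    (hu : u ∈ Bd U s) (hv : v ∈ Bd U s) : CommonAnc (simplexDag U) u v := by
  obtain ⟨m, ⟨hm, hms⟩, hmax⟩ := Set.exists_max_image {x | x ∈ Bd U s ∧ Simplicial U x} id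
    (Set.toFinite _) ⟨s, self_mem_bd s, hs⟩
  have hanc : ∀ x ∈ Bd U s, Ancestor (simplexDag U) m x := by
    intro x hx
    by_cases hxm : x = m
    · exact hxm ▸ .refl
    · exact .single ⟨hms, hs.adj hm hx (Ne.symm hxm), fun hxs => (hmax x ⟨hx, hxs⟩).lt_of_ne hxm⟩
  exact ⟨m, hanc u hu, hanc v hv⟩

lemma simplexDag_faithful [Finite V]
    (hS : ∀ u v, U.Adj u v → ∃ s, Simplicial U s ∧ u ∈ Bd U s ∧ v ∈ Bd U s) :
    Faithful (simplexDag U) U := by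
  refine fun u v huv => ⟨fun hadj => ?_, adj_of_commonAnc (fun _ _ h => ⟨h.1, h.2.1⟩) huv⟩
  obtain ⟨s, hs, hu, hv⟩ := hS u v hadj
  exact commonAnc_simplexDag_of_simplicial hs hu hv

end SimplexDag

end Graph

theorem stmt4 {V : Type*} [Fintype V] (U : SimpleGraph V) :
    (∃ R : V → V → Prop, Acyclic R ∧ Faithful R U) ↔
      (∀ u v, U.Adj u v → ∃ s, Simplicial U s ∧ u ∈ Bd U s ∧ v ∈ Bd U s) := by
  refine ⟨fun ⟨R, hA, hF⟩ u v huv => exists_simplex_of_faithful hA hF huv, fun hS => ?_⟩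
  let _ : LinearOrder V := LinearOrder.lift' _ (Fintype.equivFin V).injective
  exact ⟨simplexDag U, simplexDag_acyclic, simplexDag_faithful hS⟩
end

section
/- Every sink orientation of a graph U is transitively closed: if x → y and y → z are edges of a sink orientation, then so is x → z. -/
/-- `S` is a sink orientation of `U`: an acyclic orientation of all edges of `U`
in which an edge may point from `u` to `v` only if `Bd U u ⊆ Bd U v`. -/
def SinkOrientation {V : Type*} (U : SimpleGraph V) (S : V → V → Prop) : Prop :=
  Acyclic S ∧ (∀ u v, S u v → U.Adj u v) ∧
    (∀ u v, U.Adj u v → (S u v ↔ ¬ S v u)) ∧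
    (∀ u v, S u v → Bd U u ⊆ Bd U v)

namespace SinkOrientation

variable {V : Type*} {U : SimpleGraph V} {S : V → V → Prop}

theorem bd_subset_of_reflTransGen (hS : SinkOrientation U S) {u v : V}
    (h : Relation.ReflTransGen S u v) : Bd U u ⊆ Bd U v := by
  induction h with
  | refl => exact subset_rfl
  | tail _ hvw ih => exact ih.trans (hS.2.2.2 _ _ hvw)

theorem adj_of_transGen (hS : SinkOrientation U S) {u v : V}
    (h : Relation.TransGen S u v) : U.Adj u v := by
  have hne : u ≠ v := by
    rintro rfl
    exact hS.1 u h
  rcases hS.bd_subset_of_reflTransGen h.to_reflTransGen (Set.mem_insert u _) with heq | hadj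
  · exact absurd heq hne
  · exact hadj.symm

/-- If `u ⇝ v` were not an edge of `S`, the edge `u - v` of `U` would point back from `v` to `u`,
closing a directed cycle. -/
theorem of_transGen (hS : SinkOrientation U S) {u v : V}
    (h : Relation.TransGen S u v) : S u v := by
  by_contra hnuv
  have hvu : S v u := by
    by_contra hnvu
    exact hnuv ((hS.2.2.1 u v (hS.adj_of_transGen h)).mpr hnvu)
  exact hS.1 u (h.tail hvu)

end SinkOrientation

theorem stmt8_general {V : Type*} (U : SimpleGraph V) (S : V → V → Prop)
    (hS : SinkOrientation U S)
    (x y z : V) (hxy : S x y) (hyz : S y z) : S x z :=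
  hS.of_transGen (.tail (.single hxy) hyz)

theorem stmt8 {V : Type*} (U : SimpleGraph V) (S : V → V → Prop)
    (hS : SinkOrientation U S) (hfaith : Faithful S U)
    (x y z : V) (hxy : S x y) (hyz : S y z) : S x z :=
  stmt8_general U S hS x y z hxy hyz
end

section
/- Let U be a graph, let I be a set consisting of exactly one simplicial vertex per simplex of U such that every edge of U lies in some simplex, and let G be the DAG with edges i → j for each i ∈ I and each neighbor j of i in U. Then G is faithful to U. -/
/-!
Every directed path in the DAG `i → j` (`i ∈ I`, `j` adjacent to `i`) has length at most one:
its edges leave `I`, and `I` is independent in `U`. Hence the ancestors of `u` are `u` itself and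
the `i ∈ I` whose simplex `Bd U i` contains `u`. Two distinct vertices thus have a common ancestor
iff they lie in a common simplex, which, as simplices are cliques covering all edges, happens iff
they are adjacent.
-/

theorem Relation.ReflTransGen.eq_or_of_not_comp {α : Type*} {r : α → α → Prop}
    (h : ∀ a b c, r a b → ¬ r b c) {a b : α} (hab : Relation.ReflTransGen r a b) :
    a = b ∨ r a b := by
  induction hab with
  | refl => exact Or.inl rfl
  | tail _ hbc ih =>
    rcases ih with rfl | hab
    · exact Or.inr hbc
    · exact (h _ _ _ hab hbc).elim

def simplicialDAG {V : Type*} (U : SimpleGraph V) (I : Set V) : V → V → Prop :=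
  fun x y => x ∈ I ∧ U.Adj x y

section simplicialDAG

variable {V : Type*} {U : SimpleGraph V} {I : Set V} {i u w : V}

theorem ancestor_simplicialDAG_of_mem_Bd (hi : i ∈ I) (hu : u ∈ Bd U i) :
    Ancestor (simplicialDAG U I) i u := by
  rcases hu with rfl | hu
  · exact Relation.ReflTransGen.refl
  · exact Relation.ReflTransGen.single ⟨hi, hu⟩

theorem mem_Bd_of_ancestor_simplicialDAG (hindep : ∀ i ∈ I, ∀ j ∈ I, ¬ U.Adj i j)
    (h : Ancestor (simplicialDAG U I) w u) : u ∈ Bd U w := by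
  rcases h.eq_or_of_not_comp (fun a b _ hab hbc => hindep a hab.1 b hbc.1 hab.2) with rfl | h
  · exact Set.mem_insert _ _
  · exact Or.inr h.2

theorem eq_of_ancestor_simplicialDAG_of_notMem (hw : w ∉ I)
    (h : Ancestor (simplicialDAG U I) w u) : w = u := by
  rcases h.cases_head with h | ⟨_, hwc, _⟩
  · exact h
  · exact (hw hwc.1).elim

end simplicialDAG

theorem stmt10_general {V : Type*} (U : SimpleGraph V) (I : Set V)
    (hsimp : ∀ i ∈ I, Simplicial U i)
    (hindep : ∀ i ∈ I, ∀ j ∈ I, ¬ U.Adj i j)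
    (hcover : ∀ u v, U.Adj u v → ∃ i ∈ I, u ∈ Bd U i ∧ v ∈ Bd U i) :
    Faithful (fun x y => x ∈ I ∧ U.Adj x y) U := by
  intro u v huv
  refine ⟨fun hadj => ?_, fun ⟨w, hwu, hwv⟩ => ?_⟩
  · obtain ⟨i, hi, hu, hv⟩ := hcover u v hadj
    exact ⟨i, ancestor_simplicialDAG_of_mem_Bd hi hu, ancestor_simplicialDAG_of_mem_Bd hi hv⟩
  · by_cases hw : w ∈ I
    · exact hsimp w hw (mem_Bd_of_ancestor_simplicialDAG hindep hwu)
        (mem_Bd_of_ancestor_simplicialDAG hindep hwv) huv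
    · exact absurd ((eq_of_ancestor_simplicialDAG_of_notMem hw hwu).symm.trans
        (eq_of_ancestor_simplicialDAG_of_notMem hw hwv)) huv

theorem stmt10 {V : Type*} (U : SimpleGraph V) (I : Set V)
    (hsimp : ∀ i ∈ I, Simplicial U i)
    (hindep : ∀ i ∈ I, ∀ j ∈ I, ¬ U.Adj i j)
    (hone : ∀ i ∈ I, ∀ j ∈ I, Bd U i = Bd U j → i = j)
    (hcover : ∀ u v, U.Adj u v → ∃ i ∈ I, u ∈ Bd U i ∧ v ∈ Bd U i) :
    Faithful (fun x y => x ∈ I ∧ U.Adj x y) U :=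
  stmt10_general U I hsimp hindep hcover
end
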